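/- Let t be a contraction on H with Tr(1 − tt*) < ∞. Then both limits lim_{k→∞} Tr(1 − t^k (t*)^k)/k and lim_{k→∞} Tr(t^k (t*)^k − t^{k+1} (t*)^{k+1}) exist as finite real numbers and are equal. -/

import Mathlib

open Filter Finset ContinuousLinearMap
open scoped ENNReal Topology InnerProductSpace

/-- The trace (in `[0,∞]`) of an operator on a complex Hilbert space, computed in a
Hilbert (orthonormal) basis `b`: `Tr A = ∑ᵢ ⟨bᵢ, A bᵢ⟩` (real part, clamped to `[0,∞]`).
For a positive operator this is the usual trace, independent of the choice of basis. -/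
noncomputable def opTrace {H : Type*} [NormedAddCommGroup H] [InnerProductSpace ℂ H]
    [CompleteSpace H] {ι : Type*} (b : HilbertBasis ι ℂ H) (A : H →L[ℂ] H) : ℝ≥0∞ :=
  ∑' i, ENNReal.ofReal (inner ℂ (b i) (A (b i)) : ℂ).re

/-!
Write `1 - t t* = r r*` (possible since `t t* ≤ ‖t‖² ≤ 1`). Then
`tᵏ (t*)ᵏ - tᵏ⁺¹ (t*)ᵏ⁺¹ = (tᵏ r)(tᵏ r)*`, whose trace `dₖ` is the squared Hilbert–Schmidt
norm of `r* (t*)ᵏ`. Since the Hilbert–Schmidt norm of `C u` is at most that of `C` for a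
contraction `u`, `dₖ` is antitone, hence converges to its infimum, which is finite because
`d₀ = Tr(1 - t t*)`. The positive operators `1 - tᵏ (t*)ᵏ` telescope, so their traces are the
partial sums `d₀ + ⋯ + dₖ₋₁`, and `Tr(1 - tᵏ (t*)ᵏ)/k` converges to the same limit by Cesàro.
-/

theorem ENNReal.tendsto_sum_range_div_of_tendsto {d : ℕ → ℝ≥0∞} {L : ℝ≥0∞}
    (hd : ∀ k, d k ≠ ⊤) (hL : L ≠ ⊤) (h : Tendsto d atTop (𝓝 L)) :
    Tendsto (fun k : ℕ => (∑ j ∈ range k, d j) / k) atTop (𝓝 L) := by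
  have hces := (ENNReal.continuous_ofReal.tendsto L.toReal).comp
    ((ENNReal.tendsto_toReal hL).comp h).cesaro
  rw [ENNReal.ofReal_toReal hL] at hces
  refine hces.congr' ?_
  filter_upwards [eventually_gt_atTop 0] with k hk
  have hk' : (0 : ℝ) < k := by exact_mod_cast hk
  simp only [Function.comp_apply, inv_mul_eq_div]
  rw [ENNReal.ofReal_div_of_pos hk', ENNReal.ofReal_natCast, ← ENNReal.toReal_sum fun j _ => hd j,
    ENNReal.ofReal_toReal (ENNReal.sum_ne_top.mpr fun j _ => hd j)]

theorem pow_mul_star_pow_sub_pow_succ_mul_star_pow_succ {R : Type*} [Ring R] [StarRing R]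
    {a r : R} (hr : 1 - a * star a = r * star r) (k : ℕ) :
    a ^ k * (star a) ^ k - a ^ (k + 1) * (star a) ^ (k + 1) = (a ^ k * r) * star (a ^ k * r) := by
  rw [star_mul, star_pow, mul_assoc, ← mul_assoc r, ← hr, pow_succ, pow_succ']
  noncomm_ring

theorem CStarAlgebra.exists_one_sub_mul_star_eq_mul_star {A : Type*} [CStarAlgebra A]
    [PartialOrder A] [StarOrderedRing A] {a : A} (ha : ‖a‖ ≤ 1) :
    ∃ r, 1 - a * star a = r * star r := by
  refine CStarAlgebra.nonneg_iff_eq_mul_star_self.mp (sub_nonneg.mpr ?_)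
  calc a * star a ≤ algebraMap ℝ A (‖a‖ ^ 2) := CStarAlgebra.mul_star_le_algebraMap_norm_sq
    _ ≤ algebraMap ℝ A 1 := algebraMap_mono A (pow_le_one₀ (norm_nonneg a) ha)
    _ = 1 := map_one _

section HilbertSchmidt

variable {𝕜 E ι : Type*} [RCLike 𝕜] [NormedAddCommGroup E] [InnerProductSpace 𝕜 E]
  (b : HilbertBasis ι 𝕜 E)

theorem HilbertBasis.hasSum_norm_inner_sq (x : E) :
    HasSum (fun i => ‖⟪b i, x⟫_𝕜‖ ^ 2) (‖x‖ ^ 2) := by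
  simpa [b.repr_apply_apply] using lp.hasSum_norm (p := 2) (by norm_num) (b.repr x)

noncomputable def hilbertSchmidtNormSq (C : E →L[𝕜] E) : ℝ≥0∞ :=
  ∑' i, ENNReal.ofReal (‖C (b i)‖ ^ 2)

theorem hilbertSchmidtNormSq_eq_tsum_tsum (C : E →L[𝕜] E) :
    hilbertSchmidtNormSq b C = ∑' i, ∑' j, ENNReal.ofReal (‖⟪b j, C (b i)⟫_𝕜‖ ^ 2) := by
  refine tsum_congr fun i => ?_
  have h := b.hasSum_norm_inner_sq (C (b i))
  rw [← h.tsum_eq, ENNReal.ofReal_tsum_of_nonneg (fun j => by positivity) h.summable]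

theorem hilbertSchmidtNormSq_mul_le_left {u : E →L[𝕜] E} (hu : ‖u‖ ≤ 1) (C : E →L[𝕜] E) :
    hilbertSchmidtNormSq b (u * C) ≤ hilbertSchmidtNormSq b C := by
  refine ENNReal.tsum_le_tsum fun i => ENNReal.ofReal_le_ofReal ?_
  gcongr
  calc ‖u (C (b i))‖ ≤ ‖u‖ * ‖C (b i)‖ := u.le_opNorm _
    _ ≤ ‖C (b i)‖ := mul_le_of_le_one_left (norm_nonneg _) hu

variable [CompleteSpace E]

theorem hilbertSchmidtNormSq_star (C : E →L[𝕜] E) :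
    hilbertSchmidtNormSq b (star C) = hilbertSchmidtNormSq b C := by
  rw [hilbertSchmidtNormSq_eq_tsum_tsum, hilbertSchmidtNormSq_eq_tsum_tsum, ENNReal.tsum_comm]
  refine tsum_congr fun i => tsum_congr fun j => ?_
  rw [star_eq_adjoint, adjoint_inner_right, norm_inner_symm]

theorem hilbertSchmidtNormSq_mul_le_right {u : E →L[𝕜] E} (hu : ‖u‖ ≤ 1) (C : E →L[𝕜] E) :
    hilbertSchmidtNormSq b (C * u) ≤ hilbertSchmidtNormSq b C := by
  rw [← hilbertSchmidtNormSq_star b (C * u), ← hilbertSchmidtNormSq_star b C, star_mul]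
  exact hilbertSchmidtNormSq_mul_le_left b ((norm_star u).trans_le hu) _

end HilbertSchmidt

section opTrace

variable {H ι : Type*} [NormedAddCommGroup H] [InnerProductSpace ℂ H] [CompleteSpace H]
  (b : HilbertBasis ι ℂ H)

theorem opTrace_mul_star (a : H →L[ℂ] H) :
    opTrace b (a * star a) = hilbertSchmidtNormSq b (star a) := by
  refine tsum_congr fun i => ?_
  rw [mul_apply_eq_comp, star_eq_adjoint, ← adjoint_inner_left, inner_self_eq_norm_sq_to_K]
  norm_cast

theorem opTrace_sum {κ : Type*} (s : Finset κ) {A : κ → H →L[ℂ] H} (hA : ∀ j ∈ s, 0 ≤ A j) :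
    opTrace b (∑ j ∈ s, A j) = ∑ j ∈ s, opTrace b (A j) := by
  unfold opTrace
  rw [← Summable.tsum_finsetSum fun _ _ => ENNReal.summable]
  refine tsum_congr fun i => ?_
  rw [_root_.sum_apply, inner_sum, Complex.re_sum, ENNReal.ofReal_sum_of_nonneg]
  exact fun j hj => ((nonneg_iff_isPositive _).mp (hA j hj)).re_inner_nonneg_right _

theorem antitone_opTrace_pow_mul_mul_star {t : H →L[ℂ] H} (ht : ‖t‖ ≤ 1) (r : H →L[ℂ] H) :
    Antitone fun k : ℕ => opTrace b ((t ^ k * r) * star (t ^ k * r)) := by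
  refine antitone_nat_of_succ_le fun k => ?_
  simp only [opTrace_mul_star]
  rw [pow_succ', mul_assoc, star_mul t]
  exact hilbertSchmidtNormSq_mul_le_right b ((norm_star t).trans_le ht) _

end opTrace

/-- Parrott-type limits for a contraction `t` with `Tr(1 - t t*) < ∞`: both
`Tr(1 - tᵏ (t*)ᵏ)/k` and `Tr(tᵏ (t*)ᵏ - tᵏ⁺¹ (t*)ᵏ⁺¹)` converge to the same
finite limit. -/
theorem parrott_limits
    {H : Type*} [NormedAddCommGroup H] [InnerProductSpace ℂ H] [CompleteSpace H]
    {ι : Type*} (b : HilbertBasis ι ℂ H)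
    (t : H →L[ℂ] H) (ht : ‖t‖ ≤ 1)
    (hfin : opTrace b (1 - t * star t) ≠ ⊤) :
    ∃ L : ℝ≥0∞, L ≠ ⊤ ∧
      Filter.Tendsto (fun (k : ℕ) => opTrace b (1 - t ^ k * (star t) ^ k) / (k : ℝ≥0∞))
        Filter.atTop (nhds L) ∧
      Filter.Tendsto
        (fun (k : ℕ) => opTrace b (t ^ k * (star t) ^ k - t ^ (k + 1) * (star t) ^ (k + 1)))
        Filter.atTop (nhds L) := by
  obtain ⟨r, hr⟩ := CStarAlgebra.exists_one_sub_mul_star_eq_mul_star ht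
  have hterm := pow_mul_star_pow_sub_pow_succ_mul_star_pow_succ hr
  set d := fun k : ℕ => opTrace b (t ^ k * (star t) ^ k - t ^ (k + 1) * (star t) ^ (k + 1))
    with hd
  have hanti : Antitone d := by
    simpa only [hd, hterm] using antitone_opTrace_pow_mul_mul_star b ht r
  have hd_ne_top : ∀ k, d k ≠ ⊤ := fun k =>
    ne_top_of_le_ne_top (by simpa [d] using hfin) (hanti k.zero_le)
  have htel : ∀ k, opTrace b (1 - t ^ k * (star t) ^ k) = ∑ j ∈ range k, d j := fun k => by
    rw [← opTrace_sum b _ fun j _ => hterm j ▸ mul_star_self_nonneg _, sum_range_sub']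
    simp
  have hL : ⨅ k, d k ≠ ⊤ := ne_top_of_le_ne_top (hd_ne_top 0) (iInf_le d 0)
  refine ⟨⨅ k, d k, hL, ?_, tendsto_atTop_iInf hanti⟩
  simpa only [htel] using
    ENNReal.tendsto_sum_range_div_of_tendsto hd_ne_top hL (tendsto_atTop_iInf hanti)
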